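/- Let n, b ≥ 1 and 0 ≤ k ≤ n be integers, write n = b·m + r with 0 ≤ r < b, let Y have the hypergeometric distribution Hg(n, n−k, m) and Z the distribution Hg(n, n−k, m+1), and set B = ((b−r)/√b)·E[√Y] + (r/√b)·E[√Z]. Then B ≤ √(n−k) ≤ B + b. -/

import Mathlib

open Finset


lemma vdm (K k t : ℕ) :
    ∑ s ∈ Finset.range (t+1), K.choose s * k.choose (t - s) = (K + k).choose t := by
  rw [Nat.add_choose_eq, Finset.Nat.sum_antidiagonal_eq_sum_range_succ_mk]

lemma mom1 (K k t : ℕ) :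
    ∑ s ∈ Finset.range (t + 2), s * (K.choose s * k.choose (t + 1 - s))
      = K * ((K - 1) + k).choose t := by
  cases K with
  | zero =>
    rw [Finset.sum_eq_zero, Nat.zero_mul]
    intro s hs
    cases s with
    | zero => simp
    | succ s' => simp [Nat.choose_zero_succ]
  | succ K' =>
    rw [Finset.sum_range_succ']
    simp only [Nat.zero_mul, add_zero, Nat.succ_sub_succ]
    have : ∀ s, (s + 1) * ((K' + 1).choose (s + 1) * k.choose (t - s))
        = (K' + 1) * (K'.choose s * k.choose (t - s)) := by
      intro s
      have h := Nat.add_one_mul_choose_eq K' s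
      calc (s + 1) * ((K' + 1).choose (s + 1) * k.choose (t - s))
          = ((K' + 1).choose (s + 1) * (s + 1)) * k.choose (t - s) := by ring
        _ = ((K' + 1) * K'.choose s) * k.choose (t - s) := by rw [← h]
        _ = (K' + 1) * (K'.choose s * k.choose (t - s)) := by ring
    rw [Finset.sum_congr rfl (fun s _ => this s), ← Finset.mul_sum, vdm]
    simp

lemma mom2 (K k t : ℕ) :
    ∑ s ∈ Finset.range (t + 3), s * (s - 1) * (K.choose s * k.choose (t + 2 - s))
      = K * (K - 1) * ((K - 2) + k).choose t := by
  cases K with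
  | zero =>
    rw [Finset.sum_eq_zero]
    · simp
    intro s hs
    cases s with
    | zero => simp
    | succ s' => simp [Nat.choose_zero_succ]
  | succ K' =>
    rw [show t + 3 = (t + 2) + 1 from rfl, Finset.sum_range_succ']
    simp only [Nat.zero_mul, add_zero, Nat.succ_sub_succ, Nat.mul_zero, Nat.sub_zero,
      Nat.succ_sub_one]
    have : ∀ s, (s + 1) * s * ((K' + 1).choose (s + 1) * k.choose (t + 1 - s))
        = (K' + 1) * (s * (K'.choose s * k.choose (t + 1 - s))) := by
      intro s
      have h := Nat.add_one_mul_choose_eq K' s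
      calc (s + 1) * s * ((K' + 1).choose (s + 1) * k.choose (t + 1 - s))
          = ((K' + 1).choose (s + 1) * (s + 1)) * (s * k.choose (t + 1 - s)) := by ring
        _ = ((K' + 1) * K'.choose s) * (s * k.choose (t + 1 - s)) := by rw [← h]
        _ = (K' + 1) * (s * (K'.choose s * k.choose (t + 1 - s))) := by ring
    rw [Finset.sum_congr rfl (fun s _ => this s), ← Finset.mul_sum, mom1]
    ring


lemma sumP (n K k t : ℕ) (h : K + k = n) (ht : t ≤ n) :
    ∑ s ∈ Finset.range (t+1), ((K.choose s : ℝ) * (k.choose (t-s) : ℝ)) / (n.choose t : ℝ) = 1 := by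
  have hC : (0:ℝ) < (n.choose t : ℝ) := by exact_mod_cast Nat.choose_pos ht
  rw [← Finset.sum_div, div_eq_one_iff_eq (ne_of_gt hC)]
  have := vdm K k t
  rw [h] at this
  exact_mod_cast congrArg (Nat.cast : ℕ → ℝ) this

lemma meanP (n K k t : ℕ) (h : K + k = n) (hK : 1 ≤ K) (ht1 : 1 ≤ t) (htn : t ≤ n) :
    ∑ s ∈ Finset.range (t+1),
      ((K.choose s : ℝ) * (k.choose (t-s) : ℝ)) / (n.choose t : ℝ) * (s:ℝ)
      = (K:ℝ) * t / n := by
  obtain ⟨t', rfl⟩ : ∃ t', t = t' + 1 := ⟨t - 1, by omega⟩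
  obtain ⟨n', rfl⟩ : ∃ n', n = n' + 1 := ⟨n - 1, by omega⟩
  have hC : (0:ℝ) < ((n'+1).choose (t'+1) : ℝ) := by exact_mod_cast Nat.choose_pos htn
  have hsum : ∑ s ∈ Finset.range (t'+1+1), (s:ℝ) * ((K.choose s : ℝ) * (k.choose (t'+1-s) : ℝ))
      = (K : ℝ) * (n'.choose t' : ℝ) := by
    have := mom1 K k t'
    have hKk : (K - 1) + k = n' := by omega
    rw [hKk] at this
    exact_mod_cast congrArg (Nat.cast : ℕ → ℝ) this
  have hid : (n'+1 : ℝ) * (n'.choose t' : ℝ) = ((n'+1).choose (t'+1) : ℝ) * (t'+1 : ℝ) := by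
    exact_mod_cast congrArg (Nat.cast : ℕ → ℝ) (Nat.add_one_mul_choose_eq n' t')
  have hrw : ∑ s ∈ Finset.range (t'+1+1),
      ((K.choose s : ℝ) * (k.choose (t'+1-s) : ℝ)) / ((n'+1).choose (t'+1) : ℝ) * (s:ℝ)
      = (∑ s ∈ Finset.range (t'+1+1), (s:ℝ) * ((K.choose s : ℝ) * (k.choose (t'+1-s) : ℝ)))
        / ((n'+1).choose (t'+1) : ℝ) := by
    rw [Finset.sum_div]
    exact Finset.sum_congr rfl fun s _ => by ring
  rw [hrw, hsum]
  have hn1 : (0:ℝ) < (n' : ℝ) + 1 := by positivity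
  push_cast
  rw [div_eq_div_iff (ne_of_gt hC) (by positivity)]
  nlinarith [hid]


lemma varP (n K k t : ℕ) (h : K + k = n) (hK : 1 ≤ K) (ht1 : 1 ≤ t) (htn : t ≤ n)
    (hn : 2 ≤ n) :
    ∑ s ∈ Finset.range (t+1),
      ((K.choose s : ℝ) * (k.choose (t-s) : ℝ)) / (n.choose t : ℝ) * ((s:ℝ) * ((s:ℝ) - 1))
      = (K:ℝ) * ((K:ℝ) - 1) * t * ((t:ℝ) - 1) / ((n:ℝ) * ((n:ℝ) - 1)) := by
  have hC : (0:ℝ) < (n.choose t : ℝ) := by exact_mod_cast Nat.choose_pos htn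
  -- case t = 1
  rcases Nat.lt_or_ge t 2 with ht2 | ht2
  · obtain rfl : t = 1 := by omega
    rw [Finset.sum_range_succ, Finset.sum_range_one]
    push_cast
    ring
  -- t ≥ 2
  obtain ⟨t', rfl⟩ : ∃ t', t = t' + 2 := ⟨t - 2, by omega⟩
  obtain ⟨n', rfl⟩ : ∃ n', n = n' + 2 := ⟨n - 2, by omega⟩
  have hsum : ∑ s ∈ Finset.range (t'+2+1),
      ((s:ℝ) * ((s:ℝ) - 1)) * ((K.choose s : ℝ) * (k.choose (t'+2-s) : ℝ))
      = (K:ℝ) * ((K:ℝ) - 1) * (n'.choose t' : ℝ) := by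
    rcases Nat.lt_or_ge K 2 with hK2 | hK2
    · obtain rfl : K = 1 := by omega
      rw [Finset.sum_eq_zero]
      · push_cast; ring
      intro s hs
      match s with
      | 0 => norm_num
      | 1 => norm_num
      | (x+2) => simp [Nat.choose_eq_zero_of_lt (by omega : 1 < x + 2)]
    · obtain ⟨K', rfl⟩ : ∃ K', K = K' + 2 := ⟨K - 2, by omega⟩
      have hmm := mom2 (K'+2) k t'
      have hKk : ((K'+2) - 2) + k = n' := by omega
      rw [hKk] at hmm
      have hcast : ∑ s ∈ Finset.range (t'+3),
          ((s : ℝ) * ((s:ℝ) - 1)) * (((K'+2).choose s : ℝ) * (k.choose (t'+2-s) : ℝ))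
          = (((K'+2) * ((K'+2) - 1) * n'.choose t' : ℕ) : ℝ) := by
        rw [← hmm]
        push_cast
        apply Finset.sum_congr rfl
        intro s hs
        match s with
        | 0 => norm_num
        | (x+1) => push_cast [Nat.succ_sub_one]; ring
      rw [show t'+2+1 = t'+3 from rfl, hcast]
      push_cast
      ring
  have hid : ((n':ℝ)+2) * ((n':ℝ)+1) * (n'.choose t' : ℝ)
      = ((n'+2).choose (t'+2) : ℝ) * ((t':ℝ)+2) * ((t':ℝ)+1) := by
    have h1 := Nat.add_one_mul_choose_eq (n'+1) (t'+1)
    have h2 := Nat.add_one_mul_choose_eq n' t'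
    have h3 : (n'+2) * ((n'+1) * n'.choose t')
        = (n'+1+1).choose (t'+1+1) * (t'+1+1) * (t'+1) := by
      calc (n'+2) * ((n'+1) * n'.choose t')
          = (n'+2) * ((n'+1).choose (t'+1) * (t'+1)) := by rw [h2]
        _ = ((n'+1+1) * (n'+1).choose (t'+1)) * (t'+1) := by ring
        _ = (n'+1+1).choose (t'+1+1) * (t'+1+1) * (t'+1) := by rw [h1]
    have h4 := congrArg (Nat.cast : ℕ → ℝ) h3
    push_cast at h4
    have : (n'+1+1) = n'+2 := by omega
    rw [this] at h4
    push_cast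
    linarith [h4]
  have hrw : ∑ s ∈ Finset.range (t'+2+1),
      ((K.choose s : ℝ) * (k.choose (t'+2-s) : ℝ)) / ((n'+2).choose (t'+2) : ℝ)
        * ((s:ℝ) * ((s:ℝ) - 1))
      = (∑ s ∈ Finset.range (t'+2+1),
          ((s:ℝ) * ((s:ℝ) - 1)) * ((K.choose s : ℝ) * (k.choose (t'+2-s) : ℝ)))
        / ((n'+2).choose (t'+2) : ℝ) := by
    rw [Finset.sum_div]
    exact Finset.sum_congr rfl fun s _ => by ring
  rw [hrw, hsum]
  push_cast
  have hpos : (0:ℝ) < ((n':ℝ)+2) * ((n':ℝ)+2-1) := by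
    have : (0:ℝ) ≤ (n':ℝ) := Nat.cast_nonneg n'
    nlinarith
  rw [div_eq_div_iff (ne_of_gt hC) (ne_of_gt hpos)]
  push_cast at hid
  linear_combination ((K:ℝ) * ((K:ℝ) - 1)) * hid


lemma sqrt_pt_upper {a s : ℝ} (ha : 0 < a) (hs : 0 ≤ s) :
    Real.sqrt s ≤ (s + a) / (2 * Real.sqrt a) := by
  have hsa : 0 < Real.sqrt a := Real.sqrt_pos.mpr ha
  rw [le_div_iff₀ (by positivity)]
  nlinarith [sq_nonneg (Real.sqrt s - Real.sqrt a), Real.sq_sqrt hs, Real.sq_sqrt ha.le,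
    Real.sqrt_nonneg s]

lemma sqrt_pt_lower {a s : ℝ} (ha : 0 < a) (hs : 0 ≤ s) :
    (3 * a * s - s ^ 2) / (2 * a * Real.sqrt a) ≤ Real.sqrt s := by
  have hsa : 0 < Real.sqrt a := Real.sqrt_pos.mpr ha
  rw [div_le_iff₀ (by positivity)]
  have hu := Real.sqrt_nonneg s
  have hv := Real.sqrt_nonneg a
  have h1 := Real.sq_sqrt hs
  have h2 := Real.sq_sqrt ha.le
  nlinarith [mul_nonneg (mul_nonneg hu (sq_nonneg (Real.sqrt s - Real.sqrt a)))
      (by linarith : (0:ℝ) ≤ Real.sqrt s + 2 * Real.sqrt a)]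


lemma ES_upper (n K k t : ℕ) (h : K + k = n) (htn : t ≤ n) (hn : 1 ≤ n) :
    ∑ s ∈ Finset.range (t+1),
      ((K.choose s : ℝ) * (k.choose (t-s) : ℝ)) / (n.choose t : ℝ) * Real.sqrt s
      ≤ Real.sqrt ((K:ℝ) * t / n) := by
  rcases Nat.eq_zero_or_pos K with hK0 | hK
  · subst hK0
    have hz : ∑ s ∈ Finset.range (t+1),
        ((Nat.choose 0 s : ℝ) * (k.choose (t-s) : ℝ)) / (n.choose t : ℝ) * Real.sqrt s = 0 := by
      apply Finset.sum_eq_zero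
      intro s hs
      match s with
      | 0 => simp
      | (x+1) => simp [Nat.choose_eq_zero_of_lt (Nat.succ_pos x)]
    rw [hz]
    positivity
  rcases Nat.eq_zero_or_pos t with ht0 | ht1
  · subst ht0
    simp
  obtain ⟨a, ha_def⟩ : ∃ a : ℝ, a = (K:ℝ) * t / n := ⟨_, rfl⟩
  rw [← ha_def]
  have ha : 0 < a := by
    rw [ha_def]
    have h1 : (0:ℝ) < K := by exact_mod_cast hK
    have h2 : (0:ℝ) < t := by exact_mod_cast ht1
    have h3 : (0:ℝ) < n := by exact_mod_cast hn
    positivity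
  have hsa : 0 < Real.sqrt a := Real.sqrt_pos.mpr ha
  calc ∑ s ∈ Finset.range (t+1),
      ((K.choose s : ℝ) * (k.choose (t-s) : ℝ)) / (n.choose t : ℝ) * Real.sqrt s
      ≤ ∑ s ∈ Finset.range (t+1),
        ((K.choose s : ℝ) * (k.choose (t-s) : ℝ)) / (n.choose t : ℝ) * (((s:ℝ) + a) / (2 * Real.sqrt a)) := by
        apply Finset.sum_le_sum
        intro s hs
        have hP : (0:ℝ) ≤ ((K.choose s : ℝ) * (k.choose (t-s) : ℝ)) / (n.choose t : ℝ) := by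
          positivity
        exact mul_le_mul_of_nonneg_left (sqrt_pt_upper ha (Nat.cast_nonneg s)) hP
    _ = ((∑ s ∈ Finset.range (t+1),
          ((K.choose s : ℝ) * (k.choose (t-s) : ℝ)) / (n.choose t : ℝ) * (s:ℝ))
        + (∑ s ∈ Finset.range (t+1),
          ((K.choose s : ℝ) * (k.choose (t-s) : ℝ)) / (n.choose t : ℝ)) * a) / (2 * Real.sqrt a) := by
        rw [Finset.sum_mul, ← Finset.sum_add_distrib, Finset.sum_div]
        exact Finset.sum_congr rfl fun s _ => by ring
    _ = Real.sqrt a := by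
        rw [meanP n K k t h hK ht1 htn, sumP n K k t h htn, ← ha_def]
        have h2a : a + 1 * a = 2 * a := by ring
        rw [h2a, eq_comm, eq_div_iff (by positivity)]
        nlinarith [Real.mul_self_sqrt ha.le]

lemma ES_lower (n K k t : ℕ) (h : K + k = n) (hK : 1 ≤ K) (ht1 : 1 ≤ t) (htn : t ≤ n)
    (hn : 2 ≤ n) :
    Real.sqrt ((K:ℝ) * t / n) - ((n:ℝ) - K) / (2 * n * Real.sqrt ((K:ℝ) * t / n))
      ≤ ∑ s ∈ Finset.range (t+1),
        ((K.choose s : ℝ) * (k.choose (t-s) : ℝ)) / (n.choose t : ℝ) * Real.sqrt s := by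
  obtain ⟨a, ha_def⟩ : ∃ a : ℝ, a = (K:ℝ) * t / n := ⟨_, rfl⟩
  rw [← ha_def]
  have hKpos : (0:ℝ) < K := by exact_mod_cast hK
  have htpos : (0:ℝ) < t := by exact_mod_cast ht1
  have hnpos : (0:ℝ) < n := by exact_mod_cast (by omega : 1 ≤ n)
  have hKn : (K:ℝ) ≤ n := by exact_mod_cast (by omega : K ≤ n)
  have htn' : (t:ℝ) ≤ n := by exact_mod_cast htn
  have hn2 : (2:ℝ) ≤ n := by exact_mod_cast hn
  have ha : 0 < a := by rw [ha_def]; positivity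
  have hsa : 0 < Real.sqrt a := Real.sqrt_pos.mpr ha
  have hsa2 : Real.sqrt a * Real.sqrt a = a := Real.mul_self_sqrt ha.le
  have step1 : ∑ s ∈ Finset.range (t+1),
      ((K.choose s : ℝ) * (k.choose (t-s) : ℝ)) / (n.choose t : ℝ)
        * ((3 * a * (s:ℝ) - (s:ℝ) ^ 2) / (2 * a * Real.sqrt a))
      ≤ ∑ s ∈ Finset.range (t+1),
        ((K.choose s : ℝ) * (k.choose (t-s) : ℝ)) / (n.choose t : ℝ) * Real.sqrt s := by
    apply Finset.sum_le_sum
    intro s hs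
    have hP : (0:ℝ) ≤ ((K.choose s : ℝ) * (k.choose (t-s) : ℝ)) / (n.choose t : ℝ) := by
      positivity
    exact mul_le_mul_of_nonneg_left (sqrt_pt_lower ha (Nat.cast_nonneg s)) hP
  have step2 : ∑ s ∈ Finset.range (t+1),
      ((K.choose s : ℝ) * (k.choose (t-s) : ℝ)) / (n.choose t : ℝ)
        * ((3 * a * (s:ℝ) - (s:ℝ) ^ 2) / (2 * a * Real.sqrt a))
      = (3 * a * a
          - ((K:ℝ) * ((K:ℝ) - 1) * t * ((t:ℝ) - 1) / ((n:ℝ) * ((n:ℝ) - 1)) + a))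
        / (2 * a * Real.sqrt a) := by
    have expand : ∀ s ∈ Finset.range (t+1),
        ((K.choose s : ℝ) * (k.choose (t-s) : ℝ)) / (n.choose t : ℝ)
          * ((3 * a * (s:ℝ) - (s:ℝ) ^ 2) / (2 * a * Real.sqrt a))
        = (3 * a * (((K.choose s : ℝ) * (k.choose (t-s) : ℝ)) / (n.choose t : ℝ) * (s:ℝ))
            - (((K.choose s : ℝ) * (k.choose (t-s) : ℝ)) / (n.choose t : ℝ) * ((s:ℝ) * ((s:ℝ) - 1))
               + ((K.choose s : ℝ) * (k.choose (t-s) : ℝ)) / (n.choose t : ℝ) * (s:ℝ)))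
          / (2 * a * Real.sqrt a) := fun s _ => by ring
    rw [Finset.sum_congr rfl expand, ← Finset.sum_div]
    congr 1
    rw [Finset.sum_sub_distrib, Finset.sum_add_distrib, ← Finset.mul_sum,
      meanP n K k t h hK ht1 htn, varP n K k t h hK ht1 htn hn, ← ha_def]
  refine le_trans ?_ step1
  rw [step2, le_div_iff₀ (by positivity)]
  have hL : (Real.sqrt a - ((n:ℝ) - K) / (2 * n * Real.sqrt a)) * (2 * a * Real.sqrt a)
      = 2 * a * a - a * ((n:ℝ) - K) / n := by
    have hs2 : Real.sqrt a ^ 2 = a := Real.sq_sqrt ha.le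
    field_simp
    linear_combination (2 * (n:ℝ)) * hs2
  rw [hL]
  have hn1 : (0:ℝ) < (n:ℝ) - 1 := by linarith
  have ht1' : (1:ℝ) ≤ (t:ℝ) := by exact_mod_cast ht1
  have hfact : (0:ℝ) ≤ (K:ℝ) * t * (((n:ℝ) - K) * ((t:ℝ) - 1)) :=
    mul_nonneg (mul_nonneg hKpos.le htpos.le)
      (mul_nonneg (by linarith) (by linarith))
  have hdiff : a * a + a * ((n:ℝ) - K) / n
        - ((K:ℝ) * ((K:ℝ) - 1) * t * ((t:ℝ) - 1) / ((n:ℝ) * ((n:ℝ) - 1)) + a)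
      = ((K:ℝ) * t * (((n:ℝ) - K) * ((t:ℝ) - 1))) / ((n:ℝ) ^ 2 * ((n:ℝ) - 1)) := by
    rw [ha_def]
    field_simp
    ring
  have hq : (0:ℝ) ≤ ((K:ℝ) * t * (((n:ℝ) - K) * ((t:ℝ) - 1))) / ((n:ℝ) ^ 2 * ((n:ℝ) - 1)) :=
    div_nonneg hfact (by positivity)
  linarith [hdiff, hq]


lemma SB_sq_le (b r m n : ℕ) (hdiv : n = b*m + r) (hr : r < b) :
    (((b:ℝ) - r) * Real.sqrt m + r * Real.sqrt (m+1))^2 ≤ (b:ℝ) * n := by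
  have hm : Real.sqrt m * Real.sqrt m = (m:ℝ) := Real.mul_self_sqrt (Nat.cast_nonneg m)
  have hm1 : Real.sqrt ((m:ℝ)+1) * Real.sqrt ((m:ℝ)+1) = (m:ℝ)+1 :=
    Real.mul_self_sqrt (by positivity)
  have hcast : ((m:ℕ) + 1 : ℝ) = (m:ℝ) + 1 := by push_cast; ring
  have hcross : Real.sqrt m * Real.sqrt ((m:ℝ)+1) ≤ (m:ℝ) + 1/2 := by
    nlinarith [sq_nonneg (Real.sqrt m - Real.sqrt ((m:ℝ)+1))]
  have hbr : (r:ℝ) ≤ (b:ℝ) := by exact_mod_cast hr.le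
  have hr0 : (0:ℝ) ≤ r := Nat.cast_nonneg r
  have hnd : (n:ℝ) = (b:ℝ)*m + r := by exact_mod_cast congrArg (Nat.cast : ℕ → ℝ) hdiv
  have hw : (0:ℝ) ≤ ((b:ℝ)-r)*r := mul_nonneg (sub_nonneg.mpr hbr) hr0
  rw [show ((m:ℕ) + 1 : ℝ) = (m:ℝ)+1 by push_cast; ring]
  have hexp : (((b:ℝ) - r) * Real.sqrt m + r * Real.sqrt ((m:ℝ)+1))^2
      = ((b:ℝ)-r)^2*(Real.sqrt m*Real.sqrt m)
        + 2*(((b:ℝ)-r)*r)*(Real.sqrt m*Real.sqrt ((m:ℝ)+1))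
        + (r:ℝ)^2*(Real.sqrt ((m:ℝ)+1)*Real.sqrt ((m:ℝ)+1)) := by ring
  rw [hexp, hm, hm1]
  nlinarith [mul_le_mul_of_nonneg_left hcross hw, hw]

lemma SB_sq_ge (b r m n : ℕ) (hdiv : n = b*m + r) (hr : r < b) :
    (b:ℝ) * n - (((b:ℝ) - r) * Real.sqrt m + r * Real.sqrt (m+1))^2 ≤ (r:ℝ) * ((b:ℝ) - r) := by
  have hm : Real.sqrt m * Real.sqrt m = (m:ℝ) := Real.mul_self_sqrt (Nat.cast_nonneg m)
  have hm1 : Real.sqrt ((m:ℝ)+1) * Real.sqrt ((m:ℝ)+1) = (m:ℝ)+1 :=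
    Real.mul_self_sqrt (by positivity)
  have hcross : (m:ℝ) ≤ Real.sqrt m * Real.sqrt ((m:ℝ)+1) := by
    calc (m:ℝ) = Real.sqrt m * Real.sqrt m := hm.symm
      _ ≤ Real.sqrt m * Real.sqrt ((m:ℝ)+1) := by
          apply mul_le_mul_of_nonneg_left _ (Real.sqrt_nonneg m)
          exact Real.sqrt_le_sqrt (by linarith)
  have hbr : (r:ℝ) ≤ (b:ℝ) := by exact_mod_cast hr.le
  have hr0 : (0:ℝ) ≤ r := Nat.cast_nonneg r
  have hnd : (n:ℝ) = (b:ℝ)*m + r := by exact_mod_cast congrArg (Nat.cast : ℕ → ℝ) hdiv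
  have hw : (0:ℝ) ≤ ((b:ℝ)-r)*r := mul_nonneg (sub_nonneg.mpr hbr) hr0
  rw [show ((m:ℕ) + 1 : ℝ) = (m:ℝ)+1 by push_cast; ring]
  have hexp : (((b:ℝ) - r) * Real.sqrt m + r * Real.sqrt ((m:ℝ)+1))^2
      = ((b:ℝ)-r)^2*(Real.sqrt m*Real.sqrt m)
        + 2*(((b:ℝ)-r)*r)*(Real.sqrt m*Real.sqrt ((m:ℝ)+1))
        + (r:ℝ)^2*(Real.sqrt ((m:ℝ)+1)*Real.sqrt ((m:ℝ)+1)) := by ring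
  rw [hexp, hm, hm1]
  nlinarith [mul_le_mul_of_nonneg_left hcross hw, hw]


lemma upper_combine (n b r m K : ℕ) (hdiv : n = b*m+r) (hr : r < b) (hn : 1 ≤ n) :
    ((b:ℝ)-r)/Real.sqrt b * Real.sqrt ((K:ℝ)*m/n)
      + (r:ℝ)/Real.sqrt b * Real.sqrt ((K:ℝ)*(m+1)/n) ≤ Real.sqrt (K:ℝ) := by
  have hb : 1 ≤ b := by omega
  have hb0 : (0:ℝ) < b := by exact_mod_cast hb
  have hn0 : (0:ℝ) < n := by exact_mod_cast hn
  have hsb : 0 < Real.sqrt b := Real.sqrt_pos.mpr hb0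
  have hsn : 0 < Real.sqrt n := Real.sqrt_pos.mpr hn0
  have hrb : (r:ℝ) < b := by exact_mod_cast hr
  have e1 : Real.sqrt ((K:ℝ)*m/n) = Real.sqrt K * Real.sqrt m / Real.sqrt n := by
    rw [Real.sqrt_div (by positivity), Real.sqrt_mul (by positivity)]
  have e2 : Real.sqrt ((K:ℝ)*(m+1)/n) = Real.sqrt K * Real.sqrt ((m:ℝ)+1) / Real.sqrt n := by
    rw [Real.sqrt_div (by positivity), Real.sqrt_mul (by positivity)]
  rw [e1, e2]
  set SB : ℝ := ((b:ℝ) - r) * Real.sqrt m + r * Real.sqrt (m+1) with hSBdef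
  have hSB0 : 0 ≤ SB := by
    apply add_nonneg
    · exact mul_nonneg (by linarith) (Real.sqrt_nonneg _)
    · exact mul_nonneg (Nat.cast_nonneg r) (Real.sqrt_nonneg _)
  have hSBle : SB ≤ Real.sqrt b * Real.sqrt n := by
    have h := SB_sq_le b r m n hdiv hr
    calc SB = Real.sqrt (SB^2) := (Real.sqrt_sq hSB0).symm
      _ ≤ Real.sqrt ((b:ℝ)*n) := Real.sqrt_le_sqrt h
      _ = Real.sqrt b * Real.sqrt n := Real.sqrt_mul (by positivity) _
  have hKnn : 0 ≤ Real.sqrt (K:ℝ) := Real.sqrt_nonneg _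
  have heq : ((b:ℝ)-r)/Real.sqrt b * (Real.sqrt K * Real.sqrt m / Real.sqrt n)
      + (r:ℝ)/Real.sqrt b * (Real.sqrt K * Real.sqrt ((m:ℝ)+1) / Real.sqrt n)
      = Real.sqrt K * SB / (Real.sqrt b * Real.sqrt n) := by
    rw [hSBdef]
    field_simp
  rw [heq]
  calc Real.sqrt K * SB / (Real.sqrt b * Real.sqrt n)
      ≤ Real.sqrt K * (Real.sqrt b * Real.sqrt n) / (Real.sqrt b * Real.sqrt n) := by
        apply div_le_div_of_nonneg_right ?_ (by positivity)
        exact mul_le_mul_of_nonneg_left hSBle hKnn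
    _ = Real.sqrt K := by field_simp


lemma le_of_sq_le_sq' (x y : ℝ) (hx : 0 ≤ x) (hy : 0 ≤ y) (h : x^2 ≤ y^2) : x ≤ y := by
  nlinarith [h, hx, hy]

lemma pos_of_mul_self (x a : ℝ) (hx : 0 ≤ x) (e : x*x = a) (ha : 0 < a) : 0 < x := by
  nlinarith

lemma one_le_of_mul_self (x a : ℝ) (hx : 0 ≤ x) (e : x*x = a) (ha : 1 ≤ a) : 1 ≤ x := by
  nlinarith

lemma r_br_quarter (b r : ℝ) : r*(b-r) ≤ b^2/4 := by nlinarith [sq_nonneg (b-2*r)]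

lemma hge_aux (bn rbr SB X : ℝ) (h1 : bn - SB^2 ≤ rbr) (h2 : SB ≤ X) (h3 : 0 ≤ SB)
    (hX : X*X = bn) : (X - SB)*X ≤ rbr := by nlinarith

lemma hkey_aux (sb sn sk SB b rbr : ℝ) (hsb : 0 < sb) (hsb2 : sb*sb = b) (hsn1 : 1 ≤ sn)
    (hsk : 0 ≤ sk) (hsksn : sk ≤ sn) (hd : 0 ≤ sb*sn - SB)
    (hge : (sb*sn - SB)*(sb*sn) ≤ rbr) (hrb4 : rbr ≤ b^2/4) :
    sk*(sb*sn - SB) ≤ b/4*(sb*sn) := by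
  have h1 : sb*(sk*(sb*sn - SB)) ≤ b^2/4*sn := by
    nlinarith [mul_nonneg (mul_nonneg (sub_nonneg.mpr hsksn) hd) hsb.le,
      mul_nonneg (by positivity : (0:ℝ) ≤ b^2/4) (sub_nonneg.mpr hsn1)]
  have h2 : b^2/4*sn = sb*(b/4*(sb*sn)) := by rw [← hsb2]; ring
  rw [h2] at h1
  exact le_of_mul_le_mul_left h1 hsb

lemma hpoly_aux (b r n K m : ℝ) (hb1 : 1 ≤ b) (hr0 : 0 ≤ r) (hrb : r < b)
    (hK : b*b+1 ≤ K) (hKn : K ≤ n) (hbm : b*m = n - r) :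
    b*(n-K)^2 ≤ n*K*m := by
  have hb0 : (0:ℝ) < b := by linarith
  have hK0 : (0:ℝ) < K := by nlinarith
  have hpoly2 : b^2*(n-K)^2 ≤ n*K*(n-r) := by
    have hX0 : 0 ≤ n - b*b - 1 := by linarith
    have hnK : n - K ≤ n - b*b - 1 := by linarith
    have hnK0 : 0 ≤ n - K := by linarith
    have l2 : n - b*b - 1 ≤ n := by nlinarith
    have l3 : n - b*b - 1 ≤ n - r := by nlinarith
    have l1 : (n-K)^2 ≤ (n - b*b - 1)^2 := by nlinarith [hnK, hnK0]
    calc b^2*(n-K)^2 ≤ b^2*(n - b*b - 1)^2 :=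
        mul_le_mul_of_nonneg_left l1 (by positivity)
      _ ≤ K*(n - b*b - 1)^2 := by nlinarith [sq_nonneg (n - b*b - 1)]
      _ ≤ K*(n*(n-r)) := by
          apply mul_le_mul_of_nonneg_left _ hK0.le
          nlinarith
      _ = n*K*(n-r) := by ring
  rw [← hbm] at hpoly2
  nlinarith [hpoly2, hb0]

lemma lower_real (b r n K m sb sn sk sm sm1 : ℝ)
    (hb1 : 1 ≤ b) (hr0 : 0 ≤ r) (hrb : r < b) (hn2 : 2 ≤ n) (hK : b*b+1 ≤ K) (hKn : K ≤ n)
    (hm1 : 1 ≤ m) (hbm : b*m = n - r)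
    (hsb : 0 < sb) (hsn : 0 < sn) (hsk : 0 ≤ sk) (hsm : 0 ≤ sm) (hsm1 : 0 ≤ sm1)
    (esb : sb*sb = b) (esn : sn*sn = n) (esk : sk*sk = K) (esm : sm*sm = m)
    (esm1 : sm1*sm1 = m+1)
    (hSBle : ((b-r)*sm + r*sm1)^2 ≤ b*n)
    (hSBge : b*n - ((b-r)*sm + r*sm1)^2 ≤ r*(b-r)) :
    sk ≤ (b-r)/sb * (sk*sm/sn - (n-K)/(2*n*(sk*sm/sn)))
        + r/sb * (sk*sm1/sn - (n-K)/(2*n*(sk*sm1/sn))) + b := by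
  have hn0 : (0:ℝ) < n := by linarith
  have hb0 : (0:ℝ) < b := by linarith
  have hK0 : (0:ℝ) < K := by nlinarith [esb]
  have hsk0 : 0 < sk := pos_of_mul_self sk K hsk esk hK0
  have hsm0 : 0 < sm := pos_of_mul_self sm m hsm esm (by linarith)
  have hsm10 : 0 < sm1 := pos_of_mul_self sm1 (m+1) hsm1 esm1 (by linarith)
  have hsb1 : 1 ≤ sb := one_le_of_mul_self sb b hsb.le esb hb1
  have hsn1 : 1 ≤ sn := one_le_of_mul_self sn n hsn.le esn (by linarith)
  have hsksn : sk ≤ sn := by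
    apply le_of_sq_le_sq' sk sn hsk hsn.le
    calc sk^2 = sk*sk := sq sk
      _ = K := esk
      _ ≤ n := hKn
      _ = sn*sn := esn.symm
      _ = sn^2 := (sq sn).symm
  have hsmm1 : sm ≤ sm1 := by
    apply le_of_sq_le_sq' sm sm1 hsm hsm1
    calc sm^2 = sm*sm := sq sm
      _ = m := esm
      _ ≤ m+1 := by linarith
      _ = sm1*sm1 := esm1.symm
      _ = sm1^2 := (sq sm1).symm
  have hnK0 : 0 ≤ n - K := by linarith
  set u1 : ℝ := sk*sm/sn with hu1def
  set u2 : ℝ := sk*sm1/sn with hu2def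
  have hu1 : 0 < u1 := by rw [hu1def]; positivity
  have hu2 : 0 < u2 := by rw [hu2def]; positivity
  have hu12 : u1 ≤ u2 := by
    rw [hu1def, hu2def]
    gcongr
  set c : ℝ := (n-K)/(2*n*u1) with hcdef
  have hc0 : 0 ≤ c := by rw [hcdef]; positivity
  have hc2c : (n-K)/(2*n*u2) ≤ c := by
    rw [hcdef]
    gcongr
  set SB : ℝ := (b-r)*sm + r*sm1 with hSBdef
  have hbr0 : 0 ≤ b - r := by linarith
  have hSB0 : 0 ≤ SB := by
    rw [hSBdef]
    positivity
  have hsbsn : (sb*sn)*(sb*sn) = b*n := by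
    calc (sb*sn)*(sb*sn) = (sb*sb)*(sn*sn) := by ring
      _ = b*n := by rw [esb, esn]
  have hSBle' : SB ≤ sb*sn := by
    apply le_of_sq_le_sq' _ _ hSB0 (by positivity)
    calc SB^2 ≤ b*n := hSBle
      _ = (sb*sn)*(sb*sn) := hsbsn.symm
      _ = (sb*sn)^2 := (sq (sb*sn)).symm
  have hge : (sb*sn - SB)*(sb*sn) ≤ r*(b-r) :=
    hge_aux (b*n) (r*(b-r)) SB (sb*sn) hSBge hSBle' hSB0 hsbsn
  have hrb4 : r*(b-r) ≤ b^2/4 := r_br_quarter b r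
  have hd : 0 ≤ sb*sn - SB := by linarith
  have hkey : sk*(sb*sn - SB) ≤ b/4*(sb*sn) :=
    hkey_aux sb sn sk SB b (r*(b-r)) hsb esb hsn1 hsk hsksn hd hge hrb4
  have hX : (0:ℝ) < sb*sn := by positivity
  have piece1 : sk ≤ sk*SB/(sb*sn) + b/4 := by
    have hexp : (sk*SB/(sb*sn) + b/4)*(sb*sn) = sk*SB + b/4*(sb*sn) := by
      field_simp
    have hmul : sk*(sb*sn) ≤ (sk*SB/(sb*sn) + b/4)*(sb*sn) := by
      rw [hexp]
      linarith [hkey]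
    exact le_of_mul_le_mul_right hmul hX
  have heq2 : ((b-r)*u1 + r*u2)/sb = sk*SB/(sb*sn) := by
    rw [hu1def, hu2def, hSBdef]
    field_simp
  have hpoly : b*(n-K)^2 ≤ n*K*m := hpoly_aux b r n K m hb1 hr0 hrb hK hKn hbm
  have hnu1sq : (n*u1)^2 = n*K*m := by
    rw [hu1def]
    calc (n*(sk*sm/sn))^2 = (sk*sk)*(sm*sm)*((n*n)/(sn*sn)) := by
          field_simp
      _ = K*m*((n*n)/n) := by rw [esk, esm, esn]
      _ = n*K*m := by field_simp
  have hineq : sb*(n-K) ≤ n*u1 := by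
    apply le_of_sq_le_sq' _ _ (by positivity) (mul_nonneg hn0.le hu1.le)
    rw [hnu1sq]
    calc (sb*(n-K))^2 = (sb*sb)*(n-K)^2 := by ring
      _ = b*(n-K)^2 := by rw [esb]
      _ ≤ n*K*m := hpoly
  have piece2 : sb*c ≤ 1/2 := by
    rw [hcdef, show sb*((n-K)/(2*n*u1)) = (sb*(n-K))/(2*n*u1) by ring,
      div_le_iff₀ (by positivity)]
    linarith [hineq]
  have hbdivsb : b/sb = sb := by
    rw [← esb]
    field_simp
  calc sk ≤ sk*SB/(sb*sn) + b/4 := piece1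
    _ = ((b-r)*u1 + r*u2)/sb + b/4 := by rw [heq2]
    _ ≤ ((b-r)*u1 + r*u2)/sb - sb*c + b := by linarith [piece2]
    _ = (b-r)/sb*(u1-c) + r/sb*(u2-c) + b := by
        rw [show (b-r)/sb*(u1-c) + r/sb*(u2-c)
            = ((b-r)*u1 + r*u2)/sb - (b/sb)*c by ring, hbdivsb]
    _ ≤ (b-r)/sb * (u1 - c) + r/sb * (u2 - (n-K)/(2*n*u2)) + b := by
        have h2 : r/sb * (u2 - c) ≤ r/sb * (u2 - (n-K)/(2*n*u2)) := by
          apply mul_le_mul_of_nonneg_left _ (div_nonneg hr0 hsb.le)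
          linarith
        linarith


/-- For `n = b·m + r`, `0 ≤ r < b`, with `Y ∼ Hg(n, n-k, m)` and `Z ∼ Hg(n, n-k, m+1)`,
setting `B = ((b-r)/√b)·E[√Y] + (r/√b)·E[√Z]`, one has `B ≤ √(n-k) ≤ B + b`. -/
theorem sqrt_split_almost_equal_blocks (n b k m r : ℕ) (hn : 1 ≤ n) (hb : 1 ≤ b)
    (hk : k ≤ n) (hdiv : n = b * m + r) (hr : r < b) :
    (((b : ℝ) - r) / Real.sqrt b) * (∑ s ∈ Finset.range (m + 1),
        (((n - k).choose s * k.choose (m - s) : ℝ) / (n.choose m : ℝ)) * Real.sqrt s) +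
      ((r : ℝ) / Real.sqrt b) * (∑ s ∈ Finset.range (m + 2),
        (((n - k).choose s * k.choose (m + 1 - s) : ℝ) / (n.choose (m + 1) : ℝ)) * Real.sqrt s)
      ≤ Real.sqrt ((n : ℝ) - k) ∧
    Real.sqrt ((n : ℝ) - k)
      ≤ (((b : ℝ) - r) / Real.sqrt b) * (∑ s ∈ Finset.range (m + 1),
          (((n - k).choose s * k.choose (m - s) : ℝ) / (n.choose m : ℝ)) * Real.sqrt s) +
        ((r : ℝ) / Real.sqrt b) * (∑ s ∈ Finset.range (m + 2),
          (((n - k).choose s * k.choose (m + 1 - s) : ℝ) / (n.choose (m + 1) : ℝ)) * Real.sqrt s)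
        + b := by
  have hKk : (n - k) + k = n := by omega
  have hmlebm : m ≤ b * m := Nat.le_mul_of_pos_left m (by omega)
  have hmn : m ≤ n := by omega
  have hb0 : (0:ℝ) < b := by exact_mod_cast hb
  have hsb : 0 < Real.sqrt b := Real.sqrt_pos.mpr hb0
  have hn0 : (0:ℝ) < n := by exact_mod_cast hn
  have hrbR : (r:ℝ) < b := by exact_mod_cast hr
  have hcast : (n:ℝ) - k = ((n-k : ℕ) : ℝ) := by
    rw [Nat.cast_sub hk]
  rw [hcast]
  have hE1 := ES_upper n (n-k) k m hKk hmn hn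
  constructor
  · -- upper bound
    rcases Nat.lt_or_ge n (m+1) with hcase | hcase
    · -- degenerate: n = m, b = 1, r = 0
      have hm_eq : m = n := by omega
      have hr0 : r = 0 := by omega
      have hbn : b * m = 1 * m := by omega
      have hb1 : b = 1 := Nat.eq_of_mul_eq_mul_right (by omega : 0 < m) hbn
      subst hb1 hr0
      simp only [Nat.cast_zero, Nat.cast_one, sub_zero, zero_div, zero_mul, add_zero,
        Real.sqrt_one, div_one, one_mul]
      calc ∑ s ∈ Finset.range (m + 1),
            (((n - k).choose s * k.choose (m - s) : ℝ) / (n.choose m : ℝ)) * Real.sqrt s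
          ≤ Real.sqrt (((n-k : ℕ):ℝ) * m / n) := hE1
        _ = Real.sqrt ((n-k : ℕ):ℝ) := by
            rw [hm_eq]
            congr 1
            field_simp
    · -- main: m + 1 ≤ n
      have hE2 := ES_upper n (n-k) k (m+1) hKk hcase hn
      have hc1 : (0:ℝ) ≤ ((b:ℝ) - r)/Real.sqrt b := div_nonneg (by linarith) hsb.le
      have hc2 : (0:ℝ) ≤ (r:ℝ)/Real.sqrt b := div_nonneg (Nat.cast_nonneg r) hsb.le
      have hcomb := upper_combine n b r m (n-k) hdiv hr hn
      have hcast2 : ((m+1 : ℕ) : ℝ) = (m:ℝ) + 1 := by push_cast; ring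
      rw [hcast2] at hE2
      calc (((b : ℝ) - r) / Real.sqrt b) * (∑ s ∈ Finset.range (m + 1),
            (((n - k).choose s * k.choose (m - s) : ℝ) / (n.choose m : ℝ)) * Real.sqrt s) +
          ((r : ℝ) / Real.sqrt b) * (∑ s ∈ Finset.range (m + 2),
            (((n - k).choose s * k.choose (m + 1 - s) : ℝ) / (n.choose (m + 1) : ℝ)) * Real.sqrt s)
          ≤ (((b : ℝ) - r) / Real.sqrt b) * Real.sqrt (((n-k:ℕ):ℝ) * m / n)
            + ((r : ℝ) / Real.sqrt b) * Real.sqrt (((n-k:ℕ):ℝ) * ((m:ℝ)+1) / n) :=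
          add_le_add (mul_le_mul_of_nonneg_left hE1 hc1) (mul_le_mul_of_nonneg_left hE2 hc2)
        _ ≤ Real.sqrt ((n-k:ℕ):ℝ) := hcomb
  · -- lower bound
    rcases le_or_gt (n - k) (b*b) with hcase | hcase
    · -- trivial case: sqrt(K) ≤ b and B ≥ 0
      have h1 : Real.sqrt ((n-k:ℕ):ℝ) ≤ (b:ℝ) := by
        calc Real.sqrt ((n-k:ℕ):ℝ) ≤ Real.sqrt ((b:ℝ)*b) := by
              apply Real.sqrt_le_sqrt
              exact_mod_cast hcase
          _ = b := Real.sqrt_mul_self hb0.le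
      have h2 : (0:ℝ) ≤ (((b : ℝ) - r) / Real.sqrt b) * (∑ s ∈ Finset.range (m + 1),
          (((n - k).choose s * k.choose (m - s) : ℝ) / (n.choose m : ℝ)) * Real.sqrt s) := by
        apply mul_nonneg (div_nonneg (by linarith) hsb.le)
        apply Finset.sum_nonneg
        intro s hs
        positivity
      have h3 : (0:ℝ) ≤ ((r : ℝ) / Real.sqrt b) * (∑ s ∈ Finset.range (m + 2),
          (((n - k).choose s * k.choose (m + 1 - s) : ℝ) / (n.choose (m + 1) : ℝ)) * Real.sqrt s) := by
        apply mul_nonneg (div_nonneg (Nat.cast_nonneg r) hsb.le)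
        apply Finset.sum_nonneg
        intro s hs
        positivity
      linarith
    · -- main case : K ≥ b*b + 1
      have hbbb : b ≤ b*b := Nat.le_mul_of_pos_left b (by omega)
      have hm1 : 1 ≤ m := by
        rcases Nat.eq_zero_or_pos m with h0 | h
        · subst h0; exfalso; omega
        · exact h
      have hn2 : 2 ≤ n := by omega
      have hK1 : 1 ≤ n - k := by omega
      -- real facts
      have hKnR : ((n-k:ℕ):ℝ) ≤ n := by exact_mod_cast (by omega : n - k ≤ n)
      have hn2R : (2:ℝ) ≤ n := by exact_mod_cast hn2
      have hKbR : (b:ℝ)*b + 1 ≤ ((n-k:ℕ):ℝ) := by exact_mod_cast (by omega : b*b+1 ≤ n-k)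
      have hm1R : (1:ℝ) ≤ m := by exact_mod_cast hm1
      have hbmR : (b:ℝ)*m = (n:ℝ) - r := by
        have : (n:ℝ) = (b:ℝ)*m + r := by exact_mod_cast congrArg (Nat.cast : ℕ → ℝ) hdiv
        linarith
      have hb1R : (1:ℝ) ≤ b := by exact_mod_cast hb
      have hLR := lower_real (b:ℝ) (r:ℝ) (n:ℝ) ((n-k:ℕ):ℝ) (m:ℝ) (Real.sqrt b) (Real.sqrt n)
        (Real.sqrt ((n-k:ℕ):ℝ)) (Real.sqrt m) (Real.sqrt ((m:ℝ)+1))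
        hb1R (Nat.cast_nonneg r) hrbR hn2R hKbR hKnR hm1R hbmR
        hsb (Real.sqrt_pos.mpr hn0) (Real.sqrt_nonneg _) (Real.sqrt_nonneg _)
        (Real.sqrt_nonneg _)
        (Real.mul_self_sqrt hb0.le) (Real.mul_self_sqrt hn0.le)
        (Real.mul_self_sqrt (Nat.cast_nonneg _)) (Real.mul_self_sqrt (Nat.cast_nonneg m))
        (Real.mul_self_sqrt (by positivity))
        (SB_sq_le b r m n hdiv hr) (SB_sq_ge b r m n hdiv hr)
      -- rewrite sqrt products back into sqrt of quotients
      have hu1e : Real.sqrt (((n-k:ℕ):ℝ) * m / n)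
          = Real.sqrt ((n-k:ℕ):ℝ) * Real.sqrt m / Real.sqrt n := by
        rw [Real.sqrt_div (by positivity), Real.sqrt_mul (by positivity)]
      have hu2e : Real.sqrt (((n-k:ℕ):ℝ) * ((m:ℝ)+1) / n)
          = Real.sqrt ((n-k:ℕ):ℝ) * Real.sqrt ((m:ℝ)+1) / Real.sqrt n := by
        rw [Real.sqrt_div (by positivity), Real.sqrt_mul (by positivity)]
      rw [← hu1e, ← hu2e] at hLR
      -- bound the two expectation terms
      have hEl1 := ES_lower n (n-k) k m hKk hK1 hm1 hmn hn2
      have hterm1 : (((b:ℝ) - r)/Real.sqrt b)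
            * (Real.sqrt (((n-k:ℕ):ℝ) * m / n)
               - ((n:ℝ) - ((n-k:ℕ):ℝ)) / (2*n*Real.sqrt (((n-k:ℕ):ℝ) * m / n)))
          ≤ (((b : ℝ) - r) / Real.sqrt b) * (∑ s ∈ Finset.range (m + 1),
            (((n - k).choose s * k.choose (m - s) : ℝ) / (n.choose m : ℝ)) * Real.sqrt s) := by
        apply mul_le_mul_of_nonneg_left _ (div_nonneg (by linarith) hsb.le)
        exact hEl1
      have hterm2 : ((r:ℝ)/Real.sqrt b)
            * (Real.sqrt (((n-k:ℕ):ℝ) * ((m:ℝ)+1) / n)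
               - ((n:ℝ) - ((n-k:ℕ):ℝ)) / (2*n*Real.sqrt (((n-k:ℕ):ℝ) * ((m:ℝ)+1) / n)))
          ≤ ((r : ℝ) / Real.sqrt b) * (∑ s ∈ Finset.range (m + 2),
            (((n - k).choose s * k.choose (m + 1 - s) : ℝ) / (n.choose (m + 1) : ℝ)) * Real.sqrt s) := by
        rcases Nat.eq_zero_or_pos r with hr0 | hrpos
        · subst hr0
          simp
        · have hm1n : m + 1 ≤ n := by omega
          have hEl2 := ES_lower n (n-k) k (m+1) hKk hK1 (by omega) hm1n hn2
          have hcast2 : ((m+1 : ℕ) : ℝ) = (m:ℝ) + 1 := by push_cast; ring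
          rw [hcast2] at hEl2
          apply mul_le_mul_of_nonneg_left _ (div_nonneg (Nat.cast_nonneg r) hsb.le)
          exact hEl2
      calc Real.sqrt ((n-k:ℕ):ℝ)
          ≤ (((b:ℝ) - r)/Real.sqrt b)
              * (Real.sqrt (((n-k:ℕ):ℝ) * m / n)
                 - ((n:ℝ) - ((n-k:ℕ):ℝ)) / (2*n*Real.sqrt (((n-k:ℕ):ℝ) * m / n)))
            + ((r:ℝ)/Real.sqrt b)
              * (Real.sqrt (((n-k:ℕ):ℝ) * ((m:ℝ)+1) / n)
                 - ((n:ℝ) - ((n-k:ℕ):ℝ)) / (2*n*Real.sqrt (((n-k:ℕ):ℝ) * ((m:ℝ)+1) / n)))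
            + b := hLR
        _ ≤ _ := by
            have := add_le_add hterm1 hterm2
            linarith
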